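/- For any nonempty graph F that is a disjoint union of s copies of a graph F₁ with k edges, if (F₁, H) is (p₁,p₂)-common then (s·F₁, H) is (p₁,p₂)-common, for any positive integer s. -/

import Mathlib

/-!
The homomorphism density of a disjoint union is the product of the densities, so
`t(s·F₁, W) = t(F₁, W)^s`. Writing `t(F₁, W) = u p₁^k`, the `F₁`-term of the commonality
inequality is `u p₁ / k` and the `s·F₁`-term is `uˢ p₁ / (s k)`, while the `H`-terms are the
same. Bernoulli's inequality `uˢ ≥ 1 + s (u - 1)` gives `(uˢ - 1) p₁ / (s k) ≥ (u - 1) p₁ / k`,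
so the excess of the `s·F₁`-term over its target `p₁ / (s k)` is at least that of the
`F₁`-term over `p₁ / k`.
-/

open MeasureTheory Finset

/-- The uniform measure on the unit interval `[0,1]`, as a measure on `ℝ`. -/
noncomputable def unitM : Measure ℝ := volume.restrict (Set.Icc 0 1)

instance : SigmaFinite unitM := by unfold unitM; infer_instance

/-- Value of a symmetric two-variable function on an unordered pair of vertices. -/
noncomputable def symEdge {α : Type*} (W : ℝ → ℝ → ℝ) (x : α → ℝ) : Sym2 α → ℝ :=
  Sym2.lift ⟨fun u v => (W (x u) (x v) + W (x v) (x u)) / 2, fun u v => by ring⟩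

open Classical in
/-- Homomorphism density of a finite simple graph in a kernel. -/
noncomputable def homDensity {V : Type*} [Fintype V] (G : SimpleGraph V)
    (W : ℝ → ℝ → ℝ) : ℝ :=
  ∫ x : V → ℝ, ∏ e ∈ G.edgeFinset, symEdge W x e ∂(Measure.pi fun _ => unitM)

/-- Number of edges of a graph. -/
noncomputable def eCount {V : Type*} (G : SimpleGraph V) : ℕ := G.edgeSet.ncard

def IsSymm2 (W : ℝ → ℝ → ℝ) : Prop := ∀ x y, W x y = W y x

/-- A kernel: bounded, symmetric, measurable. -/
def IsKernel (W : ℝ → ℝ → ℝ) : Prop :=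
  Measurable (Function.uncurry W) ∧ IsSymm2 W ∧ ∃ C, ∀ x y, |W x y| ≤ C

/-- A graphon: symmetric measurable with values in `[0,1]`. -/
def IsGraphon (W : ℝ → ℝ → ℝ) : Prop :=
  Measurable (Function.uncurry W) ∧ IsSymm2 W ∧ ∀ x y, W x y ∈ Set.Icc (0:ℝ) 1

/-- The pair `(G₁, G₂)` is `(p₁,p₂)`-common. -/
def IsCommonPair {V₁ V₂ : Type*} [Fintype V₁] [Fintype V₂]
    (G₁ : SimpleGraph V₁) (G₂ : SimpleGraph V₂) (p₁ p₂ : ℝ) : Prop :=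
  ∀ W₁ W₂ : ℝ → ℝ → ℝ, IsGraphon W₁ → IsGraphon W₂ → (∀ x y, W₁ x y + W₂ x y = 1) →
    homDensity G₁ W₁ / (eCount G₁ * p₁ ^ (eCount G₁ - 1))
      + homDensity G₂ W₂ / (eCount G₂ * p₂ ^ (eCount G₂ - 1))
      ≥ p₁ / eCount G₁ + p₂ / eCount G₂

/-- The disjoint union of the graphs `F 0, …, F (s-1)` (all on vertex type `V`),
realized on the vertex type `V × Fin s`. -/
def unionGraph {V : Type*} {s : ℕ} (F : Fin s → SimpleGraph V) :
    SimpleGraph (V × Fin s) where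
  Adj a b := a.2 = b.2 ∧ (F a.2).Adj a.1 b.1
  symm := ⟨by
    rintro ⟨u, i⟩ ⟨v, j⟩ ⟨h, hadj⟩
    cases h
    exact ⟨rfl, hadj.symm⟩⟩
  loopless := ⟨by
    rintro ⟨u, i⟩ ⟨-, h⟩
    exact (F i).irrefl h⟩

lemma div_natCast_mul_pow_pred {n : ℕ} (hn : 0 < n) {p : ℝ} (hp : p ≠ 0) (b : ℝ) :
    b / (n * p ^ (n - 1)) = b / p ^ n * p / n := by
  obtain ⟨n, rfl⟩ := Nat.exists_eq_add_of_lt hn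
  simp only [zero_add, Nat.add_sub_cancel, pow_succ]
  field_simp

lemma div_sub_le_pow_div_sub {a p : ℝ} (ha : 0 ≤ a) (hp : 0 < p) {s : ℕ} (hs : 1 ≤ s) (m : ℕ) :
    a / (m * p ^ (m - 1)) - p / m
      ≤ a ^ s / ((s * m : ℕ) * p ^ (s * m - 1)) - p / (s * m : ℕ) := by
  rcases Nat.eq_zero_or_pos m with rfl | hm
  · -- both sides are `0`, the denominators being `0`
    simp
  rw [div_natCast_mul_pow_pred hm hp.ne', div_natCast_mul_pow_pred (by positivity) hp.ne',
    pow_mul', ← div_pow]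
  set u := a / p ^ m
  have bernoulli : 1 + s * (u - 1) ≤ u ^ s := by
    simpa using one_add_mul_le_pow (a := u - 1) (by linarith [show 0 ≤ u by positivity]) s
  rw [div_sub_div_same, div_sub_div_same, div_le_div_iff₀ (by positivity) (by positivity)]
  push_cast
  nlinarith [mul_le_mul_of_nonneg_left bernoulli (by positivity : (0:ℝ) ≤ p * m)]

lemma measurePreserving_pi_curry_swap {ι κ α : Type*} [Fintype ι] [Fintype κ]
    [MeasurableSpace α] (μ : Measure α) [SigmaFinite μ] :
    MeasurePreserving (fun (y : κ → ι → α) (p : ι × κ) => y p.2 p.1)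
      (Measure.pi fun _ : κ => Measure.pi fun _ : ι => μ) (Measure.pi fun _ : ι × κ => μ) := by
  have hmeas : Measurable fun (y : κ → ι → α) (p : ι × κ) => y p.2 p.1 :=
    measurable_pi_lambda _ fun p => (measurable_pi_apply p.1).comp (measurable_pi_apply p.2)
  refine ⟨hmeas, (Measure.pi_eq fun t ht => ?_).symm⟩
  have hpre : (fun (y : κ → ι → α) (p : ι × κ) => y p.2 p.1) ⁻¹' Set.univ.pi t
      = Set.univ.pi fun j => Set.univ.pi fun i => t (i, j) := by
    ext y
    simp only [Set.mem_preimage, Set.mem_pi, Set.mem_univ, true_implies]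
    exact ⟨fun h j i => h (i, j), fun h p => h p.2 p.1⟩
  rw [Measure.map_apply hmeas (MeasurableSet.univ_pi ht), hpre, Measure.pi_pi]
  simp_rw [Measure.pi_pi]
  rw [Fintype.prod_prod_type, Finset.prod_comm]

lemma symEdge_map {α β : Type*} (W : ℝ → ℝ → ℝ) (x : β → ℝ) (f : α → β) (e : Sym2 α) :
    symEdge W x (e.map f) = symEdge W (x ∘ f) e := by
  induction e using Sym2.ind with
  | _ u v => simp [symEdge]

lemma measurable_symEdge {α : Type*} {W : ℝ → ℝ → ℝ}
    (hW : Measurable (Function.uncurry W)) (e : Sym2 α) :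
    Measurable fun x : α → ℝ => symEdge W x e := by
  have hW_apply (u v : α) : Measurable fun x : α → ℝ => W (x u) (x v) :=
    hW.comp (f := fun x : α → ℝ => (x u, x v))
      ((measurable_pi_apply u).prodMk (measurable_pi_apply v))
  induction e using Sym2.ind with
  | _ u v => exact ((hW_apply u v).add (hW_apply v u)).div_const 2

lemma symEdge_nonneg {α : Type*} {W : ℝ → ℝ → ℝ} (hW : ∀ x y, 0 ≤ W x y) (x : α → ℝ)
    (e : Sym2 α) : 0 ≤ symEdge W x e := by
  induction e using Sym2.ind with
  | _ u v =>
    have := hW (x u) (x v)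
    have := hW (x v) (x u)
    simp only [symEdge, Sym2.lift_mk]
    positivity

lemma homDensity_nonneg {V : Type*} [Fintype V] (G : SimpleGraph V)
    {W : ℝ → ℝ → ℝ} (hW : ∀ x y, 0 ≤ W x y) : 0 ≤ homDensity G W :=
  integral_nonneg fun x => Finset.prod_nonneg fun e _ => symEdge_nonneg hW x e

lemma eCount_eq_card_edgeFinset {V : Type*} (G : SimpleGraph V) [Fintype G.edgeSet] :
    eCount G = #G.edgeFinset := by
  rw [eCount, ← SimpleGraph.coe_edgeFinset, Set.ncard_coe_finset]

lemma injective_prodMk_right {α β : Type*} (b : β) : Function.Injective fun a : α => (a, b) :=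
  fun _ _ h => congrArg Prod.fst h

section unionGraph

variable {V : Type*} [Fintype V] {s : ℕ} (F : Fin s → SimpleGraph V)

open Classical in
lemma unionGraph_edgeFinset :
    (unionGraph F).edgeFinset =
      univ.biUnion fun i => (F i).edgeFinset.image (Sym2.map fun v => (v, i)) := by
  ext e
  induction e using Sym2.ind with
  | _ a b =>
    obtain ⟨u, i⟩ := a
    obtain ⟨v, j⟩ := b
    simp only [SimpleGraph.mem_edgeFinset, Finset.mem_biUnion, Finset.mem_image, mem_univ,
      true_and, SimpleGraph.mem_edgeSet]
    constructor
    · rintro ⟨rfl, hadj⟩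
      exact ⟨i, s(u, v), by simpa using hadj, by simp⟩
    · rintro ⟨i', e', he', heq⟩
      induction e' using Sym2.ind with
      | _ u' v' =>
        rw [Sym2.map_mk, Sym2.eq_iff] at heq
        rcases heq with ⟨h₁, h₂⟩ | ⟨h₁, h₂⟩ <;>
          obtain ⟨rfl, rfl⟩ := Prod.mk.inj h₁ <;> obtain ⟨rfl, rfl⟩ := Prod.mk.inj h₂
        exacts [⟨rfl, he'⟩, ⟨rfl, he'.symm⟩]

open Classical in
lemma pairwiseDisjoint_image_edgeFinset :
    ((univ : Finset (Fin s)) : Set (Fin s)).PairwiseDisjoint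
      fun i => (F i).edgeFinset.image (Sym2.map fun v : V => (v, i)) := by
  intro i _ j _ hij
  simp only [Function.onFun, Finset.disjoint_left, Finset.mem_image]
  rintro _ ⟨e₁, -, rfl⟩ ⟨e₂, -, heq⟩
  induction e₁ using Sym2.ind with
  | _ u v =>
    induction e₂ using Sym2.ind with
    | _ u' v' =>
      rw [Sym2.map_mk, Sym2.map_mk, Sym2.eq_iff] at heq
      rcases heq with ⟨h, -⟩ | ⟨h, -⟩ <;> exact hij (Prod.mk.inj h).2.symm

lemma eCount_unionGraph : eCount (unionGraph F) = ∑ i, eCount (F i) := by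
  classical
  simp only [eCount_eq_card_edgeFinset]
  rw [unionGraph_edgeFinset, Finset.card_biUnion (pairwiseDisjoint_image_edgeFinset F)]
  exact Finset.sum_congr rfl fun i _ =>
    Finset.card_image_of_injective _ (Sym2.map.injective (injective_prodMk_right i))

lemma homDensity_unionGraph {W : ℝ → ℝ → ℝ} (hW : Measurable (Function.uncurry W)) :
    homDensity (unionGraph F) W = ∏ i, homDensity (F i) W := by
  classical
  have hT := measurePreserving_pi_curry_swap (ι := V) (κ := Fin s) unitM
  have hmeas : Measurable fun x : V × Fin s → ℝ =>
      ∏ e ∈ (unionGraph F).edgeFinset, symEdge W x e :=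
    Finset.measurable_prod _ fun e _ => measurable_symEdge hW e
  have hprod (y : Fin s → V → ℝ) :
      ∏ e ∈ (unionGraph F).edgeFinset, symEdge W (fun p : V × Fin s => y p.2 p.1) e
        = ∏ i, ∏ e ∈ (F i).edgeFinset, symEdge W (y i) e := by
    rw [unionGraph_edgeFinset, Finset.prod_biUnion (pairwiseDisjoint_image_edgeFinset F)]
    refine Finset.prod_congr rfl fun i _ => ?_
    rw [Finset.prod_image fun _ _ _ _ h => Sym2.map.injective (injective_prodMk_right i) h]
    exact Finset.prod_congr rfl fun e _ => symEdge_map W _ _ e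
  rw [homDensity, ← hT.map_eq, integral_map hT.measurable.aemeasurable hmeas.aestronglyMeasurable]
  simp_rw [hprod]
  exact integral_fintype_prod_eq_prod (fun i y => ∏ e ∈ (F i).edgeFinset, symEdge W y e)

end unionGraph

theorem common_copies_union_general {V₁ V₂ : Type*} [Fintype V₁] [Fintype V₂]
    (s : ℕ) (hs : 1 ≤ s)
    (F₁ : SimpleGraph V₁) (H : SimpleGraph V₂)
    (p₁ p₂ : ℝ) (hp₁ : p₁ ∈ Set.Ioo (0:ℝ) 1)
    (hcommon : IsCommonPair F₁ H p₁ p₂) :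
    IsCommonPair (unionGraph (fun _ : Fin s => F₁)) H p₁ p₂ := by
  intro W₁ W₂ hW₁ hW₂ hsum
  have hF₁ := hcommon W₁ W₂ hW₁ hW₂ hsum
  have hdensity : homDensity (unionGraph fun _ : Fin s => F₁) W₁ = homDensity F₁ W₁ ^ s := by
    simp [homDensity_unionGraph _ hW₁.1]
  have hedges : eCount (unionGraph fun _ : Fin s => F₁) = s * eCount F₁ := by
    simp [eCount_unionGraph]
  rw [hdensity, hedges]
  linarith [div_sub_le_pow_div_sub (homDensity_nonneg F₁ fun x y => (hW₁.2.2 x y).1) hp₁.1 hs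
    (eCount F₁)]

/-- If `F₁` is a nonempty graph with `k` edges and `(F₁, H)` is `(p₁,p₂)`-common,
then `(s·F₁, H)` is `(p₁,p₂)`-common for every positive integer `s`, where `s·F₁`
is the disjoint union of `s` copies of `F₁`. -/
theorem common_copies_union {V₁ V₂ : Type*} [Fintype V₁] [Fintype V₂]
    (s k : ℕ) (hs : 1 ≤ s) (hk : 1 ≤ k)
    (F₁ : SimpleGraph V₁) (H : SimpleGraph V₂)
    (hH : 1 ≤ eCount H) (hF : eCount F₁ = k)
    (p₁ p₂ : ℝ) (hp₁ : p₁ ∈ Set.Ioo (0:ℝ) 1) (hp₂ : p₂ ∈ Set.Ioo (0:ℝ) 1)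
    (hsum : p₁ + p₂ = 1)
    (hcommon : IsCommonPair F₁ H p₁ p₂) :
    IsCommonPair (unionGraph (fun _ : Fin s => F₁)) H p₁ p₂ :=
  common_copies_union_general s hs F₁ H p₁ p₂ hp₁ hcommon
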